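/- arXiv:1108.0505 — 5 statements merged into one kernel-verified Lean document; each statement's English description precedes it below -/
import Mathlib

section
/- If D is a diassociative algebra, then the product x∘y = x⊢y + y⊣x satisfies the left commutativity identity (x∘y − y∘x)∘z = 0 for all x,y,z ∈ D. -/
/-- The product `x ∘ y = x ⊢ y + y ⊣ x` on a dialgebra:
`l a b = a ⊢ b`, `r a b = a ⊣ b`, so `circ l r x y = l x y + r y x`. -/
def circ {k D : Type*} [Field k] [AddCommGroup D] [Module k D]
    (l r : D →ₗ[k] D →ₗ[k] D) (a b : D) : D :=
  l a b + r b a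

/-- in a diassociative algebra, `(x∘y − y∘x)∘z = 0`. -/
theorem stmt1 {k D : Type*} [Field k] [AddCommGroup D] [Module k D]
    (l r : D →ₗ[k] D →ₗ[k] D)
    (h1 : ∀ x y z : D, r x (l y z) = r x (r y z))
    (h2 : ∀ x y z : D, l (r x y) z = l (l x y) z)
    (h3 : ∀ x y z : D, l x (l y z) = l (l x y) z)
    (h4 : ∀ x y z : D, r x (r y z) = r (r x y) z)
    (h5 : ∀ x y z : D, l x (r y z) = r (l x y) z) :
    ∀ x y z : D, circ l r (circ l r x y - circ l r y x) z = 0 := by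
  intro x y z
  simp only [circ, map_add, map_sub, LinearMap.add_apply, LinearMap.sub_apply, h1, h2]
  abel
end

section
/- If D is a diassociative algebra over a field of characteristic ≠ 2, then D with the product x∘y = x⊢y + y⊣x satisfies the identity x∘(x²∘y) = x²∘(x∘y) for all x,y ∈ D, where x² = x∘x. -/
/-- over a field of characteristic ≠ 2, a diassociative algebra
satisfies `x ∘ (x² ∘ y) = x² ∘ (x ∘ y)` where `x² = x ∘ x`. -/
theorem stmt2 {k D : Type*} [Field k] (hchar : (2 : k) ≠ 0)
    [AddCommGroup D] [Module k D]
    (l r : D →ₗ[k] D →ₗ[k] D)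
    (h1 : ∀ x y z : D, r x (l y z) = r x (r y z))
    (h2 : ∀ x y z : D, l (r x y) z = l (l x y) z)
    (h3 : ∀ x y z : D, l x (l y z) = l (l x y) z)
    (h4 : ∀ x y z : D, r x (r y z) = r (r x y) z)
    (h5 : ∀ x y z : D, l x (r y z) = r (l x y) z) :
    ∀ x y : D,
      circ l r x (circ l r (circ l r x x) y) =
        circ l r (circ l r x x) (circ l r x y) := by
  intro x y
  simp only [circ, map_add, LinearMap.add_apply, h1, h2, h3, h4, h5]
  abel
end

section
/- Let C be an associative conformal algebra over k[T]. Define two bilinear operations on C by a⊢b = (a_λ b)|_{λ=0} and a⊣b = (a_λ b)|_{λ=−T}. Then (C, ⊢, ⊣) is a diassociative algebra, i.e. satisfies the five diassociativity identities. -/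
/-- Substitution `ν ↦ λ + μ` (outer index = power of μ, inner = power of λ). -/
noncomputable def substAdd {M : Type*} [AddCommMonoid M] (y : ℕ →₀ M) :
    ℕ →₀ (ℕ →₀ M) :=
  y.sum fun t c =>
    (Finset.range (t + 1)).sum fun i =>
      Finsupp.single (t - i) (Finsupp.single i ((t.choose i) • c))

/-- Multiplication by `λ^s` on a two-variable polynomial. -/
noncomputable def innerShift {M : Type*} [AddCommMonoid M] (s : ℕ)
    (z : ℕ →₀ (ℕ →₀ M)) : ℕ →₀ (ℕ →₀ M) :=
  z.sum fun n f => Finsupp.single n (Finsupp.mapDomain (· + s) f)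

/-- The operation `a ⊢ b = (a_λ b)|_{λ=0}` (the constant λ-coefficient). -/
noncomputable def dVdash {k C : Type*} [Field k] [AddCommGroup C] [Module k C]
    (prod : C →ₗ[k] C →ₗ[k] (ℕ →₀ C)) (a b : C) : C :=
  (prod a b) 0

/-- The operation `a ⊣ b = (a_λ b)|_{λ=−T}`: each power `λ^n` is replaced by
`(−T)^n` acting on the coefficient from the left. -/
noncomputable def dDashv {k C : Type*} [Field k] [AddCommGroup C] [Module k C]
    (T : Module.End k C) (prod : C →ₗ[k] C →ₗ[k] (ℕ →₀ C)) (a b : C) : C :=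
  (prod a b).sum fun n x => ((-1 : k) ^ n) • (T ^ n) x

/-!
Both products are evaluations of the λ-bracket: `⊢` at `λ = 0` and `⊣` at `λ = -T`. Evaluation at
`-T` kills `T + λ` and evaluation at `0` kills `λ`, so by sesquilinearity `b ↦ x ⊣ b` and
`a ↦ a ⊢ z` vanish on the image of `T`; this lets one replace an inner `⊣` by `⊢` in
`x ⊣ (y ⊣ z)` and in `(x ⊣ y) ⊢ z`. The other identities come from conformal associativity at
`μ = 0`, namely `x_λ (y ⊢ z) = ∑ₛ λˢ ((x_λ y)ₛ)_λ z`, and at `λ = 0`, namely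
`x ⊢ (y_μ z) = (x ⊢ y)_μ z`, evaluated at `0` or `-T`; here one uses that `b ↦ x ⊢ b` and
`a ↦ a ⊣ z` commute with `T`.
-/

open Finsupp

section Evaluation
variable {k C : Type*} [CommRing k] [AddCommGroup C] [Module k C] (T : Module.End k C)

noncomputable def evalNegT : (ℕ →₀ C) →ₗ[k] C :=
  Finsupp.lsum k fun n => (-1 : k) ^ n • T ^ n

lemma evalNegT_apply (p : ℕ →₀ C) :
    evalNegT T p = p.sum fun n x => (-1 : k) ^ n • (T ^ n) x := by
  rw [evalNegT, lsum_apply]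
  rfl

lemma evalNegT_single (n : ℕ) (x : C) :
    evalNegT T (single n x) = (-1 : k) ^ n • (T ^ n) x := by
  simp [evalNegT]

lemma evalNegT_mapDomain_add (s : ℕ) (p : ℕ →₀ C) :
    evalNegT T (mapDomain (· + s) p) = (-1 : k) ^ s • (T ^ s) (evalNegT T p) := by
  induction p using Finsupp.induction_linear with
  | zero => simp
  | add p q hp hq => rw [mapDomain_add, map_add, map_add, hp, hq, map_add, smul_add]
  | single n x =>
    rw [mapDomain_single, evalNegT_single, evalNegT_single, map_smul, smul_smul,
      ← Module.End.mul_apply, ← pow_add, ← pow_add, add_comm n s]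

lemma evalNegT_mapRange_of_commute (L : Module.End k C) (hL : Commute L T) (p : ℕ →₀ C) :
    evalNegT T (mapRange.linearMap L p) = L (evalNegT T p) := by
  induction p using Finsupp.induction_linear with
  | zero => simp
  | add p q hp hq => simp only [map_add, hp, hq]
  | single n x =>
    rw [mapRange.linearMap_apply, mapRange_single, evalNegT_single, evalNegT_single, map_smul,
      ← Module.End.mul_apply, ← (hL.pow_right n).eq, Module.End.mul_apply]

lemma map_evalNegT_of_forall_map_eq_zero {M : Type*} [AddCommGroup M] [Module k M]
    (f : C →ₗ[k] M) (hf : ∀ x, f (T x) = 0) (p : ℕ →₀ C) :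
    f (evalNegT T p) = f (p 0) := by
  induction p using Finsupp.induction_linear with
  | zero => simp
  | add p q hp hq => simp only [map_add, hp, hq, Finsupp.add_apply]
  | single n x =>
    rw [evalNegT_single]
    rcases n with _ | m
    · simp
    · rw [map_smul, pow_succ' T m, Module.End.mul_apply, hf, smul_zero, single_eq_of_ne (by omega),
        map_zero]

end Evaluation

section PolynomialCoefficients
variable {M : Type*} [AddCommMonoid M]

lemma sum_single_eq_mapRange {α N : Type*} [AddCommMonoid N] (g : M → N) (hg : g 0 = 0)
    (p : α →₀ M) : (p.sum fun a x => single a (g x)) = mapRange g hg p := by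
  rw [← sum_single (mapRange g hg p), sum_mapRange_index fun _ => single_zero _]

lemma mapDomain_add_apply_zero {s : ℕ} (hs : s ≠ 0) (p : ℕ →₀ M) :
    mapDomain (· + s) p 0 = 0 :=
  mapDomain_of_notMem_range _ _ (by simp [Nat.add_eq_zero_iff, hs])

lemma innerShift_apply (s : ℕ) (z : ℕ →₀ (ℕ →₀ M)) (n : ℕ) :
    innerShift s z n = mapDomain (· + s) (z n) := by
  rw [innerShift, sum_single_eq_mapRange _ mapDomain_zero, mapRange_apply]

lemma innerShift_zero (z : ℕ →₀ (ℕ →₀ M)) : innerShift 0 z = z := by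
  ext1 n
  exact (innerShift_apply 0 z n).trans mapDomain_id

lemma substAdd_apply_zero (q : ℕ →₀ M) : substAdd q 0 = q := by
  conv_rhs => rw [← sum_single q]
  rw [substAdd, Finsupp.sum_apply]
  refine sum_congr fun t _ => ?_
  rw [Finset.sum_apply', Finset.sum_eq_single_of_mem t (Finset.self_mem_range_succ t)
    fun i hi hit => single_eq_of_ne (by grind), Nat.sub_self, single_eq_same, Nat.choose_self,
    one_smul]

lemma mapRange_lapply_zero_substAdd {R : Type*} [Semiring R] [Module R M] (q : ℕ →₀ M) :
    mapRange.linearMap (lapply (R := R) 0) (substAdd q) = q := by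
  conv_rhs => rw [← sum_single q]
  rw [substAdd, map_finsuppSum]
  refine sum_congr fun t _ => ?_
  rw [map_sum, Finset.sum_eq_single_of_mem 0 (by simp) fun i _ hi => ?_]
  · simp
  · simp [single_eq_of_ne' hi]

end PolynomialCoefficients

section Sesquilinearity
variable {k C : Type*} [CommRing k] [AddCommGroup C] [Module k C] (T : Module.End k C)
  (prod : C →ₗ[k] C →ₗ[k] (ℕ →₀ C))

lemma evalNegT_prod_T_left (hs1 : ∀ a b : C, prod (T a) b = - mapDomain (· + 1) (prod a b))
    (a b : C) : evalNegT T (prod (T a) b) = T (evalNegT T (prod a b)) := by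
  rw [hs1, map_neg, evalNegT_mapDomain_add, pow_one, pow_one, neg_one_smul, neg_neg]

lemma prod_T_right_eq
    (hs2 : ∀ a b : C, prod a (T b) =
      ((prod a b).sum fun n x => single n (T x)) + mapDomain (· + 1) (prod a b))
    (a b : C) :
    prod a (T b) = mapRange.linearMap T (prod a b) + mapDomain (· + 1) (prod a b) := by
  rw [hs2, sum_single_eq_mapRange _ (map_zero T), mapRange.linearMap_apply]

lemma evalNegT_prod_T_right
    (hs2 : ∀ a b : C, prod a (T b) =
      ((prod a b).sum fun n x => single n (T x)) + mapDomain (· + 1) (prod a b))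
    (a b : C) : evalNegT T (prod a (T b)) = 0 := by
  rw [prod_T_right_eq T prod hs2, map_add, evalNegT_mapRange_of_commute T T (Commute.refl T),
    evalNegT_mapDomain_add, pow_one, pow_one, neg_one_smul, add_neg_cancel]

end Sesquilinearity

section ConformalAlgebra
variable {k C : Type*} [Field k] [AddCommGroup C] [Module k C] (T : Module.End k C)
  (prod : C →ₗ[k] C →ₗ[k] (ℕ →₀ C))

lemma dDashv_eq_evalNegT (a b : C) : dDashv T prod a b = evalNegT T (prod a b) :=
  (evalNegT_apply T _).symm

lemma dVdash_T_left (hs1 : ∀ a b : C, prod (T a) b = - mapDomain (· + 1) (prod a b))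
    (a b : C) : dVdash prod (T a) b = 0 := by
  rw [dVdash, hs1, Finsupp.neg_apply, mapDomain_add_apply_zero one_ne_zero, neg_zero]

lemma dVdash_T_right
    (hs2 : ∀ a b : C, prod a (T b) =
      ((prod a b).sum fun n x => single n (T x)) + mapDomain (· + 1) (prod a b))
    (a b : C) : dVdash prod a (T b) = T (dVdash prod a b) := by
  rw [dVdash, prod_T_right_eq T prod hs2, Finsupp.add_apply, mapDomain_add_apply_zero one_ne_zero,
    add_zero, mapRange.linearMap_apply, mapRange_apply, dVdash]

lemma prod_dVdash_right
    (hassoc : ∀ a b c : C, ((prod b c).sum fun n x => single n (prod a x)) =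
      (prod a b).sum fun s x => innerShift s (substAdd (prod x c)))
    (x y z : C) :
    prod x (dVdash prod y z) = (prod x y).sum fun s e => mapDomain (· + s) (prod e z) := by
  have h := congrArg (· 0) (hassoc x y z)
  simp only [sum_single_eq_mapRange _ (map_zero (prod x)), mapRange_apply, Finsupp.sum_apply,
    innerShift_apply, substAdd_apply_zero] at h
  exact h

lemma mapRange_dVdash_prod
    (hassoc : ∀ a b c : C, ((prod b c).sum fun n x => single n (prod a x)) =
      (prod a b).sum fun s x => innerShift s (substAdd (prod x c)))
    (x y z : C) :
    mapRange.linearMap (lapply 0 ∘ₗ prod x) (prod y z) = prod (dVdash prod x y) z := by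
  have h := congrArg (mapRange.linearMap (lapply (R := k) 0)) (hassoc x y z)
  rw [sum_single_eq_mapRange _ (map_zero (prod x)), map_finsuppSum,
    sum_eq_single 0 (fun s _ hs => ?_) (by simp [innerShift, substAdd]), innerShift_zero,
    mapRange_lapply_zero_substAdd] at h
  · rw [dVdash, ← h]
    ext n
    simp
  · ext n
    simp [innerShift_apply, mapDomain_add_apply_zero hs]

lemma dDashv_dVdash_right
    (hs2 : ∀ a b : C, prod a (T b) =
      ((prod a b).sum fun n x => single n (T x)) + mapDomain (· + 1) (prod a b))
    (x y z : C) : dDashv T prod x (dVdash prod y z) = dDashv T prod x (dDashv T prod y z) := by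
  simp only [dDashv_eq_evalNegT]
  exact (map_evalNegT_of_forall_map_eq_zero T (evalNegT T ∘ₗ prod x)
    (evalNegT_prod_T_right T prod hs2 x) _).symm

lemma dVdash_dDashv_left (hs1 : ∀ a b : C, prod (T a) b = - mapDomain (· + 1) (prod a b))
    (x y z : C) : dVdash prod (dDashv T prod x y) z = dVdash prod (dVdash prod x y) z := by
  rw [dDashv_eq_evalNegT]
  exact map_evalNegT_of_forall_map_eq_zero T (lapply 0 ∘ₗ prod.flip z)
    (fun a => dVdash_T_left T prod hs1 a z) _

lemma dVdash_assoc
    (hassoc : ∀ a b c : C, ((prod b c).sum fun n x => single n (prod a x)) =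
      (prod a b).sum fun s x => innerShift s (substAdd (prod x c)))
    (x y z : C) : dVdash prod x (dVdash prod y z) = dVdash prod (dVdash prod x y) z := by
  have h := DFunLike.congr_fun (mapRange_dVdash_prod prod hassoc x y z) 0
  rwa [mapRange.linearMap_apply, mapRange_apply] at h

lemma dDashv_assoc (hs1 : ∀ a b : C, prod (T a) b = - mapDomain (· + 1) (prod a b))
    (hs2 : ∀ a b : C, prod a (T b) =
      ((prod a b).sum fun n x => single n (T x)) + mapDomain (· + 1) (prod a b))
    (hassoc : ∀ a b c : C, ((prod b c).sum fun n x => single n (prod a x)) =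
      (prod a b).sum fun s x => innerShift s (substAdd (prod x c)))
    (x y z : C) :
    dDashv T prod x (dDashv T prod y z) = dDashv T prod (dDashv T prod x y) z := by
  set f : Module.End k C := evalNegT T ∘ₗ prod.flip z
  have hf : Commute f T := LinearMap.ext fun a => evalNegT_prod_T_left T prod hs1 a z
  calc dDashv T prod x (dDashv T prod y z)
      = evalNegT T ((prod x y).sum fun s e => mapDomain (· + s) (prod e z)) := by
        rw [← dDashv_dVdash_right T prod hs2, dDashv_eq_evalNegT, prod_dVdash_right prod hassoc]
    _ = evalNegT T (mapRange.linearMap f (prod x y)) := by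
        rw [map_finsuppSum, evalNegT_apply, mapRange.linearMap_apply,
          sum_mapRange_index fun _ => by simp]
        simp only [evalNegT_mapDomain_add]
        rfl
    _ = dDashv T prod (dDashv T prod x y) z := by
        rw [evalNegT_mapRange_of_commute T f hf, dDashv_eq_evalNegT, dDashv_eq_evalNegT]
        rfl

lemma dVdash_dDashv_assoc
    (hs2 : ∀ a b : C, prod a (T b) =
      ((prod a b).sum fun n x => single n (T x)) + mapDomain (· + 1) (prod a b))
    (hassoc : ∀ a b c : C, ((prod b c).sum fun n x => single n (prod a x)) =
      (prod a b).sum fun s x => innerShift s (substAdd (prod x c)))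
    (x y z : C) : dVdash prod x (dDashv T prod y z) = dDashv T prod (dVdash prod x y) z := by
  have hx : Commute (lapply 0 ∘ₗ prod x) T :=
    LinearMap.ext fun b => dVdash_T_right T prod hs2 x b
  rw [dDashv_eq_evalNegT, dDashv_eq_evalNegT, ← mapRange_dVdash_prod prod hassoc,
    evalNegT_mapRange_of_commute T _ hx]
  rfl

end ConformalAlgebra

theorem stmt9_general {k C : Type*} [Field k] [AddCommGroup C] [Module k C]
    (T : Module.End k C)
    (prod : C →ₗ[k] C →ₗ[k] (ℕ →₀ C))
    -- (Ta)_λ b = −λ (a_λ b)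
    (hs1 : ∀ a b : C, prod (T a) b = - Finsupp.mapDomain (· + 1) (prod a b))
    -- a_λ (Tb) = (T + λ)(a_λ b)
    (hs2 : ∀ a b : C,
      prod a (T b) =
        ((prod a b).sum fun n x => Finsupp.single n (T x)) +
          Finsupp.mapDomain (· + 1) (prod a b))
    -- (a_λ (b_μ c)) = ((a_λ b)_{λ+μ} c)
    (hassoc : ∀ a b c : C,
      ((prod b c).sum fun n x => Finsupp.single n (prod a x)) =
        (prod a b).sum fun s x => innerShift s (substAdd (prod x c))) :
    (∀ x y z : C,
      dDashv T prod x (dVdash prod y z) = dDashv T prod x (dDashv T prod y z)) ∧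
    (∀ x y z : C,
      dVdash prod (dDashv T prod x y) z = dVdash prod (dVdash prod x y) z) ∧
    (∀ x y z : C,
      dVdash prod x (dVdash prod y z) = dVdash prod (dVdash prod x y) z) ∧
    (∀ x y z : C,
      dDashv T prod x (dDashv T prod y z) = dDashv T prod (dDashv T prod x y) z) ∧
    (∀ x y z : C,
      dVdash prod x (dDashv T prod y z) = dDashv T prod (dVdash prod x y) z) :=
  ⟨dDashv_dVdash_right T prod hs2, dVdash_dDashv_left T prod hs1, dVdash_assoc prod hassoc,
    dDashv_assoc T prod hs1 hs2 hassoc, dVdash_dDashv_assoc T prod hs2 hassoc⟩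

/-- an associative conformal algebra `C` (a `k[T]`-module with a
bilinear λ-product, in the coefficient encoding `C[λ] = ℕ →₀ C`, satisfying
the sesquilinearity axioms and conformal associativity) becomes a
diassociative algebra under `a⊢b = (a_λ b)|_{λ=0}` and `a⊣b = (a_λ b)|_{λ=−T}`. -/
theorem stmt9 {k C : Type*} [Field k] [CharZero k] [AddCommGroup C] [Module k C]
    (T : Module.End k C)
    (prod : C →ₗ[k] C →ₗ[k] (ℕ →₀ C))
    -- (Ta)_λ b = −λ (a_λ b)
    (hs1 : ∀ a b : C, prod (T a) b = - Finsupp.mapDomain (· + 1) (prod a b))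
    -- a_λ (Tb) = (T + λ)(a_λ b)
    (hs2 : ∀ a b : C,
      prod a (T b) =
        ((prod a b).sum fun n x => Finsupp.single n (T x)) +
          Finsupp.mapDomain (· + 1) (prod a b))
    -- (a_λ (b_μ c)) = ((a_λ b)_{λ+μ} c)
    (hassoc : ∀ a b c : C,
      ((prod b c).sum fun n x => Finsupp.single n (prod a x)) =
        (prod a b).sum fun s x => innerShift s (substAdd (prod x c))) :
    (∀ x y z : C,
      dDashv T prod x (dVdash prod y z) = dDashv T prod x (dDashv T prod y z)) ∧
    (∀ x y z : C,
      dVdash prod (dDashv T prod x y) z = dVdash prod (dVdash prod x y) z) ∧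
    (∀ x y z : C,
      dVdash prod x (dVdash prod y z) = dVdash prod (dVdash prod x y) z) ∧
    (∀ x y z : C,
      dDashv T prod x (dDashv T prod y z) = dDashv T prod (dDashv T prod x y) z) ∧
    (∀ x y z : C,
      dVdash prod x (dDashv T prod y z) = dDashv T prod (dVdash prod x y) z) :=
  stmt9_general T prod hs1 hs2 hassoc
end

section
/- Every left Leibniz algebra L of finite dimension n over a field of characteristic 0 embeds into a diassociative algebra of dimension at most 2(n+1)². -/
set_option maxHeartbeats 1000000

/-- every finite-dimensional left Leibniz algebra of dimension
`n` over a field of characteristic 0 embeds into a diassociative algebra of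
dimension at most `2(n+1)²`.  The diassociative algebra is realized on `Fin m → k`
with operations `l = ⊢`, `r = ⊣`; the embedding is an injective linear map `φ`
which is a homomorphism into `D⁽⁻⁾`, i.e. `φ [a,b] = φ a ⊢ φ b − φ b ⊣ φ a`. -/
theorem stmt14 {k L : Type*} [Field k] [CharZero k] [AddCommGroup L] [Module k L]
    [FiniteDimensional k L]
    (brk : L →ₗ[k] L →ₗ[k] L)
    (leib : ∀ x y z : L,
      brk x (brk y z) = brk (brk x y) z + brk y (brk x z)) :
    ∃ m : ℕ, m ≤ 2 * (Module.finrank k L + 1) ^ 2 ∧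
      ∃ l r : (Fin m → k) →ₗ[k] (Fin m → k) →ₗ[k] (Fin m → k),
        (∀ x y z, r x (l y z) = r x (r y z)) ∧
        (∀ x y z, l (r x y) z = l (l x y) z) ∧
        (∀ x y z, l x (l y z) = l (l x y) z) ∧
        (∀ x y z, r x (r y z) = r (r x y) z) ∧
        (∀ x y z, l x (r y z) = r (l x y) z) ∧
        ∃ φ : L →ₗ[k] (Fin m → k), Function.Injective φ ∧
          ∀ a b : L, φ (brk a b) = l (φ a) (φ b) - r (φ b) (φ a) := by
  classical
  let A := Module.End k (L × k)
  -- diassociative operations on A × A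
  let l' : (A × A) →ₗ[k] (A × A) →ₗ[k] (A × A) :=
    LinearMap.mk₂ k (fun x y => (x.1 * y.1, x.1 * y.2))
      (by intro a b c; simp [add_mul])
      (by intro t a c; simp [smul_mul_assoc])
      (by intro a b c; simp [mul_add])
      (by intro t a c; simp [mul_smul_comm])
  let r' : (A × A) →ₗ[k] (A × A) →ₗ[k] (A × A) :=
    LinearMap.mk₂ k (fun x y => (x.1 * y.1, x.2 * y.1))
      (by intro a b c; simp [add_mul])
      (by intro t a c; simp [smul_mul_assoc])
      (by intro a b c; simp [mul_add])
      (by intro t a c; simp [mul_smul_comm])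
  -- the embedding into A × A
  let ρ : L →ₗ[k] A :=
    { toFun := fun x =>
        { toFun := fun v => (brk x v.1, 0)
          map_add' := by intro v w; simp [Prod.ext_iff]
          map_smul' := by intro t v; simp [Prod.ext_iff] }
      map_add' := by
        intro x y; apply LinearMap.ext; intro v
        show (brk (x + y) v.1, (0:k)) = (brk x v.1, (0:k)) + (brk y v.1, (0:k))
        simp
      map_smul' := by
        intro t x; apply LinearMap.ext; intro v
        show (brk (t • x) v.1, (0:k)) = t • (brk x v.1, (0:k))
        simp [Prod.ext_iff] }
  let σ : L →ₗ[k] A :=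
    { toFun := fun x =>
        { toFun := fun v => (v.2 • x, 0)
          map_add' := by intro v w; simp [Prod.ext_iff, add_smul]
          map_smul' := by intro t v; simp [Prod.ext_iff, mul_smul] }
      map_add' := by
        intro x y; apply LinearMap.ext; intro v
        show (v.2 • (x + y), (0:k)) = (v.2 • x, (0:k)) + (v.2 • y, (0:k))
        simp [smul_add]
      map_smul' := by
        intro t x; apply LinearMap.ext; intro v
        show (v.2 • (t • x), (0:k)) = t • (v.2 • x, (0:k))
        simp [Prod.ext_iff]
        exact smul_comm _ _ _ }
  let φ' : L →ₗ[k] (A × A) := ρ.prod σ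
  have hφ'inj : Function.Injective φ' := by
    rw [injective_iff_map_eq_zero]
    intro x hx
    have h2 : σ x = 0 := congrArg Prod.snd hx
    have h5 := DFunLike.congr_fun h2 ((0 : L), (1 : k))
    have h4 : (1 : k) • x = (0 : L) := congrArg Prod.fst h5
    simpa using h4
  have hφ'hom : ∀ a b : L, φ' (brk a b) = l' (φ' a) (φ' b) - r' (φ' b) (φ' a) := by
    intro a b
    have h1 : ρ (brk a b) = ρ a * ρ b - ρ b * ρ a := by
      apply LinearMap.ext; intro v
      show (brk (brk a b) v.1, (0:k)) =
        (brk a (brk b v.1), (0:k)) - (brk b (brk a v.1), (0:k))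
      have := leib a b v.1
      simp [Prod.ext_iff, this]
    have h2 : σ (brk a b) = ρ a * σ b - σ b * ρ a := by
      apply LinearMap.ext; intro v
      show (v.2 • brk a b, (0:k)) = (brk a (v.2 • b), (0:k)) - ((0:k) • b, (0:k))
      simp [Prod.ext_iff]
    have h3 : φ' (brk a b) = (ρ (brk a b), σ (brk a b)) := rfl
    rw [h3, h1, h2]
    simp [l', r', φ', Prod.ext_iff]
  -- transport to Fin m → k
  have hfd : FiniteDimensional k (A × A) := by infer_instance
  have hV : Module.finrank k (L × k) = Module.finrank k L + 1 := by
    simp [Module.finrank_prod]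
  have hA' : Module.finrank k A = (Module.finrank k L + 1) ^ 2 := by
    have h := Module.finrank_linearMap k k (L × k) (L × k)
    show Module.finrank k ((L × k) →ₗ[k] (L × k)) = (Module.finrank k L + 1) ^ 2
    rw [h, hV]; ring
  refine ⟨Module.finrank k (A × A), ?_, ?_⟩
  · rw [Module.finrank_prod, hA']
    omega
  · set m := Module.finrank k (A × A) with hm
    let e : (A × A) ≃ₗ[k] (Fin m → k) := (Module.finBasis k (A × A)).equivFun
    let l := (e.arrowCongr (e.arrowCongr e)) l'
    let r := (e.arrowCongr (e.arrowCongr e)) r'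
    have hl : ∀ x y, l x y = e (l' (e.symm x) (e.symm y)) := fun x y => rfl
    have hr : ∀ x y, r x y = e (r' (e.symm x) (e.symm y)) := fun x y => rfl
    have hl'r' : ∀ x y z : A × A,
        (r' x (l' y z) = r' x (r' y z)) ∧ (l' (r' x y) z = l' (l' x y) z) ∧
        (l' x (l' y z) = l' (l' x y) z) ∧ (r' x (r' y z) = r' (r' x y) z) ∧
        (l' x (r' y z) = r' (l' x y) z) := by
      intro x y z
      refine ⟨?_, ?_, ?_, ?_, ?_⟩ <;> simp [l', r', mul_assoc]
    refine ⟨l, r, ?_, ?_, ?_, ?_, ?_, e.toLinearMap ∘ₗ φ', ?_, ?_⟩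
    · intro x y z
      rw [hl, hr, hr, hr, LinearEquiv.symm_apply_apply, LinearEquiv.symm_apply_apply,
        (hl'r' _ _ _).1]
    · intro x y z
      rw [hr, hl, hl, hl, LinearEquiv.symm_apply_apply, LinearEquiv.symm_apply_apply,
        (hl'r' _ _ _).2.1]
    · intro x y z
      rw [hl, hl, hl, hl, LinearEquiv.symm_apply_apply, LinearEquiv.symm_apply_apply,
        (hl'r' _ _ _).2.2.1]
    · intro x y z
      rw [hr, hr, hr, hr, LinearEquiv.symm_apply_apply, LinearEquiv.symm_apply_apply,
        (hl'r' _ _ _).2.2.2.1]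
    · intro x y z
      rw [hl, hr, hr, hl, LinearEquiv.symm_apply_apply, LinearEquiv.symm_apply_apply,
        (hl'r' _ _ _).2.2.2.2]
    · exact e.injective.comp hφ'inj
    · intro a b
      simp only [LinearMap.comp_apply, LinearEquiv.coe_coe]
      rw [hl, hr, LinearEquiv.symm_apply_apply, LinearEquiv.symm_apply_apply,
        ← map_sub, hφ'hom]
end

section
/- Let C be the associative conformal algebra which is the free k[T]-module on W = k[x] ⊕ kw with λ-products u_λ w = 0 for u ∈ W, f(x)_λ g(x) = f(x−T−λ)g(x), and w_λ f(x) = f(T)w for f,g ∈ k[x]. Then C cannot be embedded into any associative conformal algebra C_e possessing a conformal unit e (an element with (e_λ x)|_{λ=0} = x for all x and e_λ e = e). -/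
section Cex

variable (k : Type*) [Field k] [CharZero k]

/-- The space of generators `W = k[x] ⊕ kw`: the first component is `f(x)`,
the second is the coefficient of `w`. -/
abbrev Wgen := Polynomial k × k

/-- The counterexample conformal algebra `C`: the free `k[T]`-module on
`W = k[x] ⊕ kw`, encoded as `ℕ →₀ W` (the index is the power of `T`). -/
abbrev Cex := ℕ →₀ Wgen k

/-- The action of `T` on `C` (the index shift). -/
noncomputable def Tex : Module.End k (Cex k) :=
  Finsupp.lmapDomain (Wgen k) k (· + 1)

/-- The λ-product of generators:
`f(x)_λ g(x) = f(x − T − λ) g(x)`, `w_λ f(x) = f(T) w`, `u_λ w = 0`.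
The result is a λ-polynomial with coefficients in `C` (outer index =
power of λ, then power of `T`, then an element of `W`).  For the first
formula we expand `(x − T − λ)^j = Σ_{p+q+r=j} j!/(p!q!r!) x^p (−T)^q (−λ)^r`
using `j!/(p!q!r!) = C(j,r)·C(j−r,q)`. -/
noncomputable def genProd (u v : Wgen k) : ℕ →₀ Cex k :=
  ((Finset.range (u.1.natDegree + 1)).sum fun j =>
    (Finset.range (j + 1)).sum fun r' =>
      (Finset.range (j - r' + 1)).sum fun q =>
        Finsupp.single r'
          (Finsupp.single q
            ((u.1.coeff j * (j.choose r' : k) * ((j - r').choose q : k) *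
                (-1 : k) ^ (q + r')) •
              ((Polynomial.X : Polynomial k) ^ (j - r' - q) * v.1, (0 : k)))))
  + (Finset.range (v.1.natDegree + 1)).sum fun n =>
      Finsupp.single 0
        (Finsupp.single n ((0 : Polynomial k), u.2 * v.1.coeff n))

/-- The λ-product on `C`, extended from generators by sesquilinearity:
`(T^m u)_λ (T^n v) = (−λ)^m (T+λ)^n (u_λ v)`. -/
noncomputable def prodEx (y z : Cex k) : ℕ →₀ Cex k :=
  y.sum fun m u => z.sum fun n v =>
    (Finset.range (n + 1)).sum fun i =>
      Finsupp.mapDomain (· + (m + i))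
        ((genProd k u v).sum fun p c =>
          Finsupp.single p
            ((((-1 : k) ^ m) * (n.choose i : k)) • ((Tex k) ^ (n - i)) c))

end Cex

open Finsupp

theorem Finsupp.sum_single_apply_of_map_zero {M N : Type*} [AddCommMonoid M] [AddCommMonoid N]
    (P : ℕ →₀ M) (g : M → N) (hg : g 0 = 0) (m : ℕ) :
    (P.sum fun n x => single n (g x)) m = g (P m) := by
  classical
  simp only [sum_apply, single_apply]
  rw [sum_ite_eq']
  split_ifs with h
  · rfl
  · rw [notMem_support_iff.mp h, hg]

theorem Finsupp.exists_ne_zero_and_succ_eq_zero {M : Type*} [Zero M] {P : ℕ →₀ M}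
    (hP : P ≠ 0) : ∃ d, P d ≠ 0 ∧ P (d + 1) = 0 := by
  have hne : P.support.Nonempty := support_nonempty_iff.mpr hP
  refine ⟨P.support.max' hne, mem_support_iff.mp (P.support.max'_mem hne), ?_⟩
  by_contra h
  have := P.support.le_max' _ (mem_support_iff.mpr h)
  omega

section EvalAtNeg

variable {M : Type*} [AddCommGroup M]

theorem substAdd_add (a b : ℕ →₀ M) : substAdd (a + b) = substAdd a + substAdd b :=
  sum_add_index' (fun _ => by simp) fun _ _ _ => by
    simp only [smul_add, single_add, Finset.sum_add_distrib]

theorem innerShift_add (s : ℕ) (a b : ℕ →₀ (ℕ →₀ M)) :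
    innerShift s (a + b) = innerShift s a + innerShift s b :=
  sum_add_index' (fun _ => by simp) fun _ _ _ => by
    rw [mapDomain_add, single_add]

theorem innerShift_finsetSum {ι : Type*} (s : ℕ) (A : Finset ι)
    (g : ι → ℕ →₀ (ℕ →₀ M)) :
    innerShift s (∑ i ∈ A, g i) = ∑ i ∈ A, innerShift s (g i) :=
  map_sum (AddMonoidHom.mk' (M := ℕ →₀ ℕ →₀ M) (innerShift s) (innerShift_add s)) g A

/-- The substitution `μ = -λ` in a polynomial in `λ, μ` (outer index the power of `μ`). -/
noncomputable def evalAtNeg : (ℕ →₀ (ℕ →₀ M)) →+ (ℕ →₀ M) :=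
  liftAddHom fun m => (-1 : ℤ) ^ m • mapDomain.addMonoidHom (· + m)

theorem evalAtNeg_single (m : ℕ) (f : ℕ →₀ M) :
    evalAtNeg (single m f) = (-1 : ℤ) ^ m • mapDomain (· + m) f :=
  liftAddHom_apply_single _ _ _

theorem evalAtNeg_single_zero (f : ℕ →₀ M) : evalAtNeg (single 0 f) = f := by
  rw [evalAtNeg_single, pow_zero, one_smul]
  exact mapDomain_id

theorem evalAtNeg_innerShift_substAdd_single (s t : ℕ) (c : M) :
    evalAtNeg (innerShift s (substAdd (single t c))) = single s (single t c 0) := by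
  -- each term is shaped as in `add_pow` for `(1 + (-1)) ^ t`
  have hterm : ∀ i ∈ Finset.range (t + 1),
      evalAtNeg (innerShift s (single (t - i) (single i (t.choose i • c)))) =
        single (t + s) ((1 ^ i * (-1 : ℤ) ^ (t - i) * t.choose i) • c) := by
    intro i hi
    have hit : i + s + (t - i) = t + s := by have := Finset.mem_range.mp hi; omega
    rw [innerShift, sum_single_index (by simp), mapDomain_single, evalAtNeg_single,
      mapDomain_single, hit, smul_single, one_pow, one_mul, mul_smul, natCast_zsmul]
  rw [substAdd, sum_single_index (by simp), innerShift_finsetSum, map_sum,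
    Finset.sum_congr rfl hterm, ← single_finsetSum, ← Finset.sum_smul, ← add_pow,
    add_neg_cancel, zero_pow_eq]
  rcases eq_or_ne t 0 with rfl | ht
  · simp
  · simp [ht]

theorem evalAtNeg_innerShift_substAdd (s : ℕ) (Q : ℕ →₀ M) :
    evalAtNeg (innerShift s (substAdd Q)) = single s (Q 0) := by
  induction Q using Finsupp.induction with
  | zero => simp [substAdd, innerShift]
  | single_add t c Q _ _ ih =>
    rw [substAdd_add, innerShift_add, map_add, ih, evalAtNeg_innerShift_substAdd_single,
      ← single_add, Finsupp.add_apply]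

end EvalAtNeg

theorem evalAtNeg_apply_of_assoc {k Ce : Type*} [CommSemiring k] [AddCommGroup Ce] [Module k Ce]
    (prod : Ce →ₗ[k] Ce →ₗ[k] (ℕ →₀ Ce)) {a b c : Ce}
    (h : ((prod b c).sum fun n x => single n (prod a x)) =
      (prod a b).sum fun s x => innerShift s (substAdd (prod x c))) (n : ℕ) :
    evalAtNeg ((prod b c).sum fun n x => single n (prod a x)) n = prod (prod a b n) c 0 := by
  simp only [h, map_finsuppSum, evalAtNeg_innerShift_substAdd]
  exact sum_single_apply_of_map_zero _ (fun x => prod x c 0) (by simp) n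

namespace Cex

variable (k : Type*) [Field k]

noncomputable def w : Cex k := single 0 (0, 1)

noncomputable def x : Cex k := single 0 (Polynomial.X, 0)

theorem w_ne_zero : w k ≠ 0 := by simp [w]

theorem genProd_zero_left (v : Wgen k) : genProd k 0 v = 0 := by
  simp [genProd, Prod.mk_zero_zero]

theorem prodEx_w_x : prodEx k (w k) (x k) = single 0 (Tex k (w k)) := by
  have hgen : genProd k (0, 1) (Polynomial.X, 0) = single 0 (single 1 (0, 1)) := by
    simp [genProd, Finset.sum_range_succ]
  rw [prodEx, w, x, sum_single_index (by simp [genProd_zero_left]),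
    sum_single_index (by simp [genProd]), hgen, Finset.sum_range_one, sum_single_index (by simp)]
  simp [Tex]

end Cex

theorem stmt17_general {k : Type*} [Field k]
    {Ce : Type*} [AddCommGroup Ce] [Module k Ce]
    (Te : Module.End k Ce)
    (prodE : Ce →ₗ[k] Ce →ₗ[k] (ℕ →₀ Ce))
    -- a_λ (Tb) = (T + λ)(a_λ b)
    (hs2 : ∀ a b : Ce,
      prodE a (Te b) =
        ((prodE a b).sum fun n x => Finsupp.single n (Te x)) +
          Finsupp.mapDomain (· + 1) (prodE a b))
    -- (a_λ (b_μ c)) = ((a_λ b)_{λ+μ} c)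
    (hassoc : ∀ a b c : Ce,
      ((prodE b c).sum fun n x => Finsupp.single n (prodE a x)) =
        (prodE a b).sum fun s x => innerShift s (substAdd (prodE x c)))
    -- a conformal unit
    (e : Ce)
    (hu1 : ∀ x : Ce, (prodE e x) 0 = x)
    -- an embedding of C into C_e
    (φ : Cex k →ₗ[k] Ce)
    (hφT : ∀ y : Cex k, φ (Tex k y) = Te (φ y))
    (hφp : ∀ y z : Cex k,
      prodE (φ y) (φ z) = (prodEx k y z).sum fun n x => Finsupp.single n (φ x)) :
    ¬ Function.Injective φ := by
  intro hinj
  set b := φ (Cex.w k)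
  set c := φ (Cex.x k)
  have hb : b ≠ 0 := (map_ne_zero_iff φ hinj).mpr (Cex.w_ne_zero k)
  have hbc : prodE b c = single 0 (Te b) := by
    rw [hφp, Cex.prodEx_w_x, sum_single_index (by simp), hφT]
  have heb : prodE e b ≠ 0 := fun h => hb (by rw [← hu1 b, h, Finsupp.zero_apply])
  obtain ⟨d, hd, hd1⟩ := exists_ne_zero_and_succ_eq_zero heb
  have hcoeff : prodE e b d = prodE (prodE e b (d + 1)) c 0 := by
    rw [← evalAtNeg_apply_of_assoc prodE (hassoc e b c), hbc, sum_single_index (by simp),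
      evalAtNeg_single_zero, hs2, Finsupp.add_apply, sum_single_apply_of_map_zero _ _ (map_zero Te),
      mapDomain_apply (add_left_injective 1), hd1, map_zero, zero_add]
  exact hd (by rw [hcoeff, hd1, LinearMap.map_zero₂, Finsupp.zero_apply])

/-- the associative conformal algebra `C` — the free
`k[T]`-module on `W = k[x] ⊕ kw` with `u_λ w = 0`,
`f(x)_λ g(x) = f(x−T−λ) g(x)`, `w_λ f(x) = f(T) w` — cannot be embedded into
any associative conformal algebra `C_e` possessing a conformal unit `e`
(i.e. `(e_λ x)|_{λ=0} = x` for all `x` and `e_λ e = e`).  Conformal algebras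
are given in the coefficient encoding (`C_e[λ] = ℕ →₀ C_e`), an embedding is
an injective `k`-linear map commuting with `T` and with the λ-products. -/
theorem stmt17 {k : Type*} [Field k] [CharZero k]
    {Ce : Type*} [AddCommGroup Ce] [Module k Ce]
    (Te : Module.End k Ce)
    (prodE : Ce →ₗ[k] Ce →ₗ[k] (ℕ →₀ Ce))
    -- (Ta)_λ b = −λ (a_λ b)
    (hs1 : ∀ a b : Ce, prodE (Te a) b = - Finsupp.mapDomain (· + 1) (prodE a b))
    -- a_λ (Tb) = (T + λ)(a_λ b)
    (hs2 : ∀ a b : Ce,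
      prodE a (Te b) =
        ((prodE a b).sum fun n x => Finsupp.single n (Te x)) +
          Finsupp.mapDomain (· + 1) (prodE a b))
    -- (a_λ (b_μ c)) = ((a_λ b)_{λ+μ} c)
    (hassoc : ∀ a b c : Ce,
      ((prodE b c).sum fun n x => Finsupp.single n (prodE a x)) =
        (prodE a b).sum fun s x => innerShift s (substAdd (prodE x c)))
    -- a conformal unit
    (e : Ce)
    (hu1 : ∀ x : Ce, (prodE e x) 0 = x)
    (hu2 : prodE e e = Finsupp.single 0 e)
    -- an embedding of C into C_e
    (φ : Cex k →ₗ[k] Ce)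
    (hφT : ∀ y : Cex k, φ (Tex k y) = Te (φ y))
    (hφp : ∀ y z : Cex k,
      prodE (φ y) (φ z) = (prodEx k y z).sum fun n x => Finsupp.single n (φ x)) :
    ¬ Function.Injective φ :=
  stmt17_general Te prodE hs2 hassoc e hu1 φ hφT hφp
end
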